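/- arXiv:2103.00459 — 2 statements merged into one kernel-verified Lean document; each statement's English description precedes it below -/
import Mathlib

section
/- Let X ∈ Sp(2p,2n) and X_⊥ a 2n×(2n-2p) full-rank matrix whose columns span the orthogonal complement of the column space of X. Then the 2n×2n matrix [X J_{2p} , J_{2n} X_⊥] is invertible. -/
/-!
Multiplying `M = [X J₂ₚ, J₂ₙ X⊥]` on the left by the block rows `-Xᵀ J₂ₙ` and `(J₂ₙ X⊥)ᵀ` gives a
block lower-triangular matrix: its diagonal blocks are `-(Xᵀ J₂ₙ X) J₂ₚ = -J₂ₚ² = 1` and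
`X⊥ᵀ X⊥` (as `J₂ₙ` is orthogonal), and its upper-right block `-Xᵀ J₂ₙ² X⊥ = Xᵀ X⊥` vanishes.
The Gram matrix `X⊥ᵀ X⊥` is invertible because `X⊥` has full column rank, so `M` has a left
inverse; as `p ≤ n`, `M` is square, and a one-sided inverse is two-sided.
-/

open Matrix

noncomputable def J (m : ℕ) : Matrix (Fin m ⊕ Fin m) (Fin m ⊕ Fin m) ℝ :=
  Matrix.fromBlocks 0 1 (-1) 0

namespace Matrix

variable {m n K : Type*} [Fintype m] [Fintype n] [DecidableEq n] [Field K]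

theorem isUnit_of_rank_eq_card {A : Matrix n n K} (h : A.rank = Fintype.card n) : IsUnit A := by
  rw [← mulVec_surjective_iff_isUnit, ← coe_mulVecLin, ← LinearMap.range_eq_top]
  exact Submodule.eq_top_of_finrank_eq (by rw [← rank, h, Module.finrank_fintype_fun_eq_card])

theorem isUnit_transpose_mul_self_of_rank_eq_card [LinearOrder K] [IsStrictOrderedRing K]
    {A : Matrix m n K} (h : A.rank = Fintype.card n) : IsUnit (Aᵀ * A) :=
  isUnit_of_rank_eq_card (by rw [rank_transpose_mul_self, h])

theorem exists_inverse_of_isUnit_mul [DecidableEq m] {M : Matrix m n K} {L : Matrix n m K}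
    (hLM : IsUnit (L * M)) (hcard : Fintype.card m = Fintype.card n) :
    ∃ B : Matrix n m K, M * B = 1 ∧ B * M = 1 := by
  have hBM : ((L * M)⁻¹ * L) * M = 1 := by
    rw [Matrix.mul_assoc, nonsing_inv_mul _ ((isUnit_iff_isUnit_det _).mp hLM)]
  exact ⟨_, (mul_eq_one_comm_of_equiv (Fintype.equivOfCardEq hcard)).mpr hBM, hBM⟩

end Matrix

theorem J_eq_neg_matrix_J (m : ℕ) : J m = -Matrix.J (Fin m) ℝ := by
  rw [_root_.J, Matrix.J, fromBlocks_neg]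
  simp

theorem J_mul_J (m : ℕ) : J m * J m = -1 := by
  rw [J_eq_neg_matrix_J, neg_mul_neg, J_squared]

theorem transpose_J_mul_mul_J_mul {k : Type*} [Fintype k] (m : ℕ)
    (Y : Matrix (Fin m ⊕ Fin m) k ℝ) : (J m * Y)ᵀ * (J m * Y) = Yᵀ * Y := by
  rw [transpose_mul, Matrix.mul_assoc, ← Matrix.mul_assoc (J m)ᵀ, J_eq_neg_matrix_J,
    transpose_neg, Matrix.J_transpose, neg_neg, Matrix.mul_neg, J_squared, neg_neg, Matrix.one_mul]

theorem neg_mul_J_mul_J_mul {k l : Type*} [Fintype k] (m : ℕ) (A : Matrix k (Fin m ⊕ Fin m) ℝ)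
    (B : Matrix (Fin m ⊕ Fin m) l ℝ) : -(A * J m) * (J m * B) = A * B := by
  rw [Matrix.neg_mul, Matrix.mul_assoc, ← Matrix.mul_assoc (J m), J_mul_J, Matrix.neg_mul,
    Matrix.one_mul, Matrix.mul_neg, neg_neg]

theorem neg_transpose_mul_J_mul_mul_J {p n : ℕ} {X : Matrix (Fin n ⊕ Fin n) (Fin p ⊕ Fin p) ℝ}
    (hX : Xᵀ * J n * X = J p) : -(Xᵀ * J n) * (X * J p) = 1 := by
  rw [Matrix.neg_mul, ← Matrix.mul_assoc, hX, J_mul_J, neg_neg]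

theorem sp_concat_invertible (p n : ℕ) (hpn : p ≤ n)
    (X : Matrix (Fin n ⊕ Fin n) (Fin p ⊕ Fin p) ℝ)
    (hX : Xᵀ * J n * X = J p)
    (Xperp : Matrix (Fin n ⊕ Fin n) (Fin (2 * n - 2 * p)) ℝ)
    (hrank : Xperp.rank = 2 * n - 2 * p)
    (horth : Xperpᵀ * X = 0) :
    ∃ B : Matrix ((Fin p ⊕ Fin p) ⊕ Fin (2 * n - 2 * p)) (Fin n ⊕ Fin n) ℝ,
      Matrix.fromCols (X * J p) (J n * Xperp) * B = 1 ∧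
      B * Matrix.fromCols (X * J p) (J n * Xperp) = 1 := by
  have hXXperp : Xᵀ * Xperp = 0 := by simpa using congrArg transpose horth
  refine exists_inverse_of_isUnit_mul (L := fromRows (-(Xᵀ * J n)) (J n * Xperp)ᵀ) ?_
    (by simp only [Fintype.card_sum, Fintype.card_fin]; omega)
  rw [fromRows_mul_fromCols, neg_transpose_mul_J_mul_mul_J hX, neg_mul_J_mul_J_mul, hXXperp,
    transpose_J_mul_mul_J_mul, isUnit_fromBlocks_zero₁₂]
  exact ⟨isUnit_one, isUnit_transpose_mul_self_of_rank_eq_card (by rw [hrank, Fintype.card_fin])⟩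
end

section
/- Let X ∈ Sp(2p,2n) and Ω ∈ ℝ^{2p×2p} skew-symmetric. Then N = J_{2n} X Ω is orthogonal (with respect to the trace inner product ⟨A,B⟩ = tr(AᵀB)) to every tangent vector Z = X J_{2p} W + J_{2n} X_⊥ K, where W is symmetric, X_⊥ᵀ X = 0, and K is arbitrary. That is, tr(Nᵀ Z) = 0. -/
open Matrix

lemma J_transpose' (m : ℕ) : (_root_.J m)ᵀ = -(_root_.J m) := by
  simp [_root_.J, Matrix.fromBlocks_transpose, Matrix.fromBlocks_neg]

lemma J_sq' (m : ℕ) : _root_.J m * _root_.J m = -1 := by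
  simp only [_root_.J, Matrix.fromBlocks_multiply]
  norm_num
  ext i j
  rcases i with i|i <;> rcases j with j|j <;>
    simp [Matrix.one_apply, Matrix.fromBlocks]

theorem sp_normal_orthogonal (p n : ℕ) (X : Matrix (Fin n ⊕ Fin n) (Fin p ⊕ Fin p) ℝ)
    (hX : Xᵀ * J n * X = J p)
    (Ω : Matrix (Fin p ⊕ Fin p) (Fin p ⊕ Fin p) ℝ) (hΩ : Ωᵀ = -Ω)
    (W : Matrix (Fin p ⊕ Fin p) (Fin p ⊕ Fin p) ℝ) (hW : Wᵀ = W)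
    (Xperp : Matrix (Fin n ⊕ Fin n) (Fin (2 * n - 2 * p)) ℝ)
    (horth : Xperpᵀ * X = 0)
    (K : Matrix (Fin (2 * n - 2 * p)) (Fin p ⊕ Fin p) ℝ) :
    Matrix.trace ((J n * X * Ω)ᵀ * (X * J p * W + J n * Xperp * K)) = 0 := by
  have hXp : Xᵀ * Xperp = 0 := by
    calc Xᵀ * Xperp = (Xperpᵀ * X)ᵀ := by simp
    _ = 0 := by rw [horth]; simp
  have hT : (J n * X * Ω)ᵀ = Ω * Xᵀ * J n := by
    simp only [Matrix.transpose_mul, hΩ, J_transpose', Matrix.neg_mul,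
      Matrix.mul_neg, neg_neg, Matrix.mul_assoc]
  rw [hT, Matrix.mul_add, trace_add]
  have h1 : Ω * Xᵀ * J n * (X * J p * W) = -(Ω * W) := by
    calc Ω * Xᵀ * J n * (X * J p * W)
        = Ω * ((Xᵀ * J n * X) * (J p * W)) := by simp only [Matrix.mul_assoc]
      _ = Ω * (J p * (J p * W)) := by rw [hX]
      _ = Ω * ((J p * J p) * W) := by simp only [Matrix.mul_assoc]
      _ = -(Ω * W) := by rw [J_sq']; simp
  have h2 : Ω * Xᵀ * J n * (J n * Xperp * K) = 0 := by
    calc Ω * Xᵀ * J n * (J n * Xperp * K)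
        = Ω * (Xᵀ * ((J n * J n) * (Xperp * K))) := by simp only [Matrix.mul_assoc]
      _ = -(Ω * ((Xᵀ * Xperp) * K)) := by
          rw [J_sq']; simp only [Matrix.neg_mul, Matrix.mul_neg, Matrix.one_mul,
            Matrix.mul_assoc]
      _ = 0 := by rw [hXp]; simp
  rw [h1, h2, trace_zero, add_zero, trace_neg]
  have h4 := Matrix.trace_transpose (Ω * W)
  rw [Matrix.transpose_mul, hΩ, hW, Matrix.mul_neg, trace_neg,
    Matrix.trace_mul_comm] at h4
  linarith [h4]
end
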